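/- arXiv:1608.05124 — 2 statements merged into one kernel-verified Lean document; each statement's English description precedes it below -/
import Mathlib

section
/- Let k be a field and let g be a finite-dimensional Lie algebra over k equipped with a nondegenerate invariant symmetric bilinear form κ. Let L be a Lie subalgebra of g such that (i) L is a simple Lie algebra, (ii) L is totally isotropic with respect to κ, (iii) 2·dim L = dim g, and (iv) the normalizer of L in g equals L. Then L is a maximal proper subalgebra of g: every Lie subalgebra M of g with L ≤ M satisfies M = L or M = g. -/
/-!
Since `L` is totally isotropic of half the dimension, it is Lagrangian: `L^⊥ = L`. For a
subalgebra `M ⊇ L`, invariance of `κ` makes `M^⊥` stable under `ad L`, and `M^⊥ ⊆ L^⊥ = L`, so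
`M^⊥` is an ideal of the simple algebra `L`. Hence either `M^⊥ = 0`, so `M = M^⊥⊥ = g`, or
`M^⊥ = L`, so `M = M^⊥⊥ = L^⊥ = L`.
-/

open Module LieAlgebra

namespace LinearMap.BilinForm

variable {K V : Type*} [Field K] [AddCommGroup V] [Module K V] [FiniteDimensional K V]
  {B : LinearMap.BilinForm K V}

theorem orthogonal_eq_self_of_le_orthogonal (hB : B.Nondegenerate) {W : Submodule K V}
    (hW : W ≤ B.orthogonal W) (hdim : 2 * finrank K W = finrank K V) : B.orthogonal W = W :=
  (Submodule.eq_of_le_of_finrank_le hW (by rw [finrank_orthogonal hB]; omega)).symm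

end LinearMap.BilinForm

namespace LieSubalgebra

variable {R L : Type*} [CommRing R] [LieRing L] [LieAlgebra R L]

def toLieSubmoduleOfLE {K M : LieSubalgebra R L} (h : K ≤ M) : LieSubmodule R K L where
  toSubmodule := M.toSubmodule
  lie_mem {x _} hm := M.lie_mem (h x.2) hm

theorem lieInvariant_of_lie_assoc {Φ : LinearMap.BilinForm R L} (hsymm : ∀ x y, Φ x y = Φ y x)
    (hinv : ∀ x y z : L, Φ ⁅x, y⁆ z = Φ x ⁅y, z⁆) (K : LieSubalgebra R L) : Φ.lieInvariant K :=
  fun x y z => by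
    rw [coe_bracket_of_module, coe_bracket_of_module, hinv, hsymm, hinv, ← lie_skew (x : L) z,
      map_neg, neg_neg]

theorem disjoint_or_le_orthogonal_of_isSimple {Φ : LinearMap.BilinForm R L}
    {K M : LieSubalgebra R L} [IsSimple R K] (hΦ : Φ.lieInvariant K) (hKM : K ≤ M) :
    Disjoint (K : Submodule R L) (Φ.orthogonal M) ∨ (K : Submodule R L) ≤ Φ.orthogonal M := by
  let I : LieIdeal R K := (InvariantForm.orthogonal Φ hΦ (toLieSubmoduleOfLE hKM)).comap K.incl'
  have hI : I.toSubmodule = (Φ.orthogonal M).comap (K : Submodule R L).subtype := rfl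
  rw [Submodule.disjoint_iff_comap_eq_bot, ← Submodule.comap_subtype_eq_top, ← hI,
    LieSubmodule.toSubmodule_eq_bot, LieSubmodule.toSubmodule_eq_top]
  exact IsSimple.eq_bot_or_eq_top I

end LieSubalgebra

open LinearMap.BilinForm LieSubalgebra in
theorem ermolaev_maximality_argument_general
    {k : Type*} [Field k] {g : Type*} [LieRing g] [LieAlgebra k g]
    [FiniteDimensional k g]
    (κ : g →ₗ[k] g →ₗ[k] k)
    (hsymm : ∀ x y : g, κ x y = κ y x)
    (hinv : ∀ x y z : g, κ ⁅x, y⁆ z = κ x ⁅y, z⁆)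
    (hnondeg : ∀ x : g, (∀ y : g, κ x y = 0) → x = 0)
    (L : LieSubalgebra k g)
    (hsimple : LieAlgebra.IsSimple k L)
    (hiso : ∀ u ∈ L, ∀ v ∈ L, κ u v = 0)
    (hdim : 2 * Module.finrank k L = Module.finrank k g) :
    ∀ M : LieSubalgebra k g, L ≤ M → M = L ∨ M = ⊤ := by
  intro M hLM
  have hrefl : κ.IsRefl := fun x y h => hsymm x y ▸ h
  have hnd : κ.Nondegenerate := hrefl.nondegenerate_iff_separatingLeft.mpr hnondeg
  have hL : orthogonal κ L = L :=
    orthogonal_eq_self_of_le_orthogonal hnd (fun v hv u hu => hiso u hu v hv) hdim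
  have hM : orthogonal κ (orthogonal κ M) = M := orthogonal_orthogonal hnd hrefl _
  rcases disjoint_or_le_orthogonal_of_isSimple (lieInvariant_of_lie_assoc hsymm hinv L) hLM
    with hdisj | hle
  · right
    have hbot : orthogonal κ M = ⊥ := hdisj.symm.eq_bot_of_le (hL ▸ orthogonal_le hLM)
    rw [← toSubmodule_inj, ← hM, hbot, orthogonal_bot, top_toSubmodule]
  · left
    refine le_antisymm ?_ hLM
    rw [← toSubmodule_le_toSubmodule, ← hM, ← hL]
    exact orthogonal_le hle

/-- Let `k` be a field and `g` a finite-dimensional Lie algebra over `k` with a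
nondegenerate invariant symmetric bilinear form `κ`.  If `L` is a Lie subalgebra of `g`
that is simple, totally isotropic for `κ`, of dimension half that of `g`, and
self-normalizing, then `L` is a maximal proper subalgebra of `g`. -/
theorem ermolaev_maximality_argument
    {k : Type*} [Field k] {g : Type*} [LieRing g] [LieAlgebra k g]
    [FiniteDimensional k g]
    (κ : g →ₗ[k] g →ₗ[k] k)
    (hsymm : ∀ x y : g, κ x y = κ y x)
    (hinv : ∀ x y z : g, κ ⁅x, y⁆ z = κ x ⁅y, z⁆)
    (hnondeg : ∀ x : g, (∀ y : g, κ x y = 0) → x = 0)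
    (L : LieSubalgebra k g)
    (hsimple : LieAlgebra.IsSimple k L)
    (hiso : ∀ u ∈ L, ∀ v ∈ L, κ u v = 0)
    (hdim : 2 * Module.finrank k L = Module.finrank k g)
    (hnorm : L.normalizer = L) :
    ∀ M : LieSubalgebra k g, L ≤ M → M = L ∨ M = ⊤ :=
  ermolaev_maximality_argument_general κ hsymm hinv hnondeg L hsimple hiso hdim
end

section
/- Let k be a commutative ring, let A = k[x₁,x₂] be the polynomial ring in two variables over k, and let ∂₁, ∂₂ denote the partial-derivative k-derivations of A. For f,g ∈ A define the derivation β(f,g) := (f·∂₂(g) − g·∂₂(f))•∂₁ + (g·∂₁(f) − f·∂₁(g))•∂₂, for a derivation D define div(D) := ∂₁(D(x₁)) + ∂₂(D(x₂)), and define the action D·f := D(f) + div(D)·f. Then with D := x₁•∂₁, the Jacobi sum ⁅D, β(x₁,x₂)⁆ + β(x₂, D·x₁) − β(x₁, D·x₂) equals −3•(x₁•∂₁ + x₂•∂₂). In particular, this Jacobi sum vanishes if and only if 3 = 0 in k. -/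
open MvPolynomial

/-- The "second component" bracket of the Ermolaev construction:
`[f,g] := (f·∂₂(g) − g·∂₂(f))∂₁ + (g·∂₁(f) − f·∂₁(g))∂₂`,
where `∂₁ = pderiv 0`, `∂₂ = pderiv 1`, viewed as a derivation of `k[x₁,x₂]`. -/
noncomputable def ermolaevBracket {k : Type*} [CommRing k]
    (f g : MvPolynomial (Fin 2) k) :
    Derivation k (MvPolynomial (Fin 2) k) (MvPolynomial (Fin 2) k) :=
  (f * pderiv 1 g - g * pderiv 1 f) • pderiv 0
    + (g * pderiv 0 f - f * pderiv 0 g) • pderiv 1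

/-- The divergence `div(D) := ∂₁(D(x₁)) + ∂₂(D(x₂))` of a derivation of `k[x₁,x₂]`. -/
noncomputable def ermolaevDiv {k : Type*} [CommRing k]
    (D : Derivation k (MvPolynomial (Fin 2) k) (MvPolynomial (Fin 2) k)) :
    MvPolynomial (Fin 2) k :=
  pderiv 0 (D (X 0)) + pderiv 1 (D (X 1))

/-- The action `D · f := D(f) + div(D)·f` of a derivation on `k[x₁,x₂]`. -/
noncomputable def ermolaevAct {k : Type*} [CommRing k]
    (D : Derivation k (MvPolynomial (Fin 2) k) (MvPolynomial (Fin 2) k))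
    (f : MvPolynomial (Fin 2) k) : MvPolynomial (Fin 2) k :=
  D f + ermolaevDiv D * f

set_option maxHeartbeats 1000000 in
/-- With `D := x₁∂₁`, the Jacobi sum
`⁅D, [x₁,x₂]⁆ + [x₂, D·x₁] − [x₁, D·x₂]` equals `−3·(x₁∂₁ + x₂∂₂)`;
in particular it vanishes if and only if `3 = 0` in `k`. -/
theorem ermolaev_jacobi_obstruction {k : Type*} [CommRing k]
    (J : Derivation k (MvPolynomial (Fin 2) k) (MvPolynomial (Fin 2) k))
    (hJ : J = ⁅(X 0 : MvPolynomial (Fin 2) k) •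
                (pderiv 0 : Derivation k (MvPolynomial (Fin 2) k) (MvPolynomial (Fin 2) k)),
              ermolaevBracket (X 0) (X 1)⁆
          + ermolaevBracket (X 1) (ermolaevAct ((X 0 : MvPolynomial (Fin 2) k) • pderiv 0) (X 0))
          - ermolaevBracket (X 0) (ermolaevAct ((X 0 : MvPolynomial (Fin 2) k) • pderiv 0) (X 1))) :
    J = (-3 : ℤ) • ((X 0 : MvPolynomial (Fin 2) k) •
          (pderiv 0 : Derivation k (MvPolynomial (Fin 2) k) (MvPolynomial (Fin 2) k))
          + (X 1 : MvPolynomial (Fin 2) k) • pderiv 1)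
      ∧ (J = 0 ↔ (3 : k) = 0) := by
  have h01 : ((0 : Fin 2) : Fin 2) ≠ 1 := by decide
  have h10 : ((1 : Fin 2) : Fin 2) ≠ 0 := by decide
  have hmain : J = (-3 : ℤ) • ((X 0 : MvPolynomial (Fin 2) k) •
          (pderiv 0 : Derivation k (MvPolynomial (Fin 2) k) (MvPolynomial (Fin 2) k))
          + (X 1 : MvPolynomial (Fin 2) k) • pderiv 1) := by
    subst hJ
    apply derivation_ext
    intro i
    fin_cases i <;>
    · simp only [Fin.mk_zero, Fin.mk_one, Fin.isValue, ermolaevBracket, ermolaevAct, ermolaevDiv, Derivation.commutator_apply,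
        Derivation.add_apply, Derivation.sub_apply, Derivation.smul_apply,
        pderiv_X_self, pderiv_X_of_ne h01, pderiv_X_of_ne h10, smul_eq_mul,
        mul_one, mul_zero, zero_mul, one_mul, sub_zero, zero_sub, add_zero, zero_add,
        map_zero, map_add, map_mul, map_neg, map_sub, Derivation.map_smul]
      rw [zsmul_eq_mul]; push_cast; ring
  refine ⟨hmain, ?_⟩
  constructor
  · intro h0
    have h1 := congrArg (fun D : Derivation k (MvPolynomial (Fin 2) k) (MvPolynomial (Fin 2) k) => D (X 0)) (hmain.symm.trans h0)
    simp only [Derivation.smul_apply, Derivation.add_apply, pderiv_X_self,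
      pderiv_X_of_ne h01, smul_eq_mul, mul_one, smul_zero, add_zero,
      Derivation.zero_apply] at h1
    rw [mul_zero, add_zero] at h1
    have h2 := congrArg (coeff (Finsupp.single 0 1)) h1
    simp only [coeff_smul, coeff_zero, coeff_X, smul_eq_mul, mul_one] at h2
    have h4 : ((-3 : ℤ) : k) = 0 := by simpa using h2
    have := neg_eq_zero.mp (by push_cast at h4; exact h4)
    exact this
  · intro h3
    rw [hmain]
    have hk : ((-3 : ℤ) : k) = 0 := by push_cast; simp [h3]
    ext a
    simp only [Derivation.smul_apply, Derivation.zero_apply, zsmul_eq_mul]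
    rw [← map_intCast (C : k →+* MvPolynomial (Fin 2) k) (-3), hk, map_zero, zero_mul]
end
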